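/- arXiv:2405.02851 — 5 statements merged into one kernel-verified Lean document; each statement's English description precedes it below -/
import Mathlib

section
/- Let f∈𝒦⁻. Then every finitely supported sequence φ∈ℓ²_fin(ℕ) belongs to the domain of T_f, i.e., the limit lim_{m→∞} T_{f,m}φ exists in ℓ²(ℕ). In particular T_f is a densely defined operator on ℓ²(ℕ). -/
open Filter Topology
open scoped ENNReal

noncomputable section

abbrev l2 : Type := lp (fun _ : ℕ => ℂ) 2

def xi (n : ℕ) : l2 := lp.single 2 n 1

def FinSupp (φ : l2) : Prop := (Function.support (⇑φ : ℕ → ℂ)).Finite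

/-- The class 𝒦. -/
def MemK (f : ℕ → ℝ) : Prop := 0 < f 0 ∧ ∀ n, f n < f (n + 1)

/-- The class 𝒦⁻. -/
def MemKminus (f : ℕ → ℝ) : Prop := MemK f ∧ Summable (fun n => 1 / (f n) ^ 2)

def fsq (f : ℕ → ℝ) : ℕ → ℝ := fun n => (f n) ^ 2

/-- the sequence of the multiplication operator `f(N)` applied to φ -/
def mulSeq (f : ℕ → ℝ) (φ : ℕ → ℂ) : ℕ → ℂ := fun n => ((f n : ℝ) : ℂ) * φ n

/-- the sequence of `f(N)^p` applied to φ -/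
def powSeq (f : ℕ → ℝ) (p : ℕ) (φ : ℕ → ℂ) : ℕ → ℂ := fun n => (((f n) ^ p : ℝ) : ℂ) * φ n

/-- coordinates of `T_{f,m} φ`. -/
def TfmSeq (f : ℕ → ℝ) (m : ℕ) (φ : ℕ → ℂ) : ℕ → ℂ := fun n =>
  Complex.I * ∑ k ∈ Finset.Icc 1 m,
    ((if k ≤ n then φ (n - k) / ((f n - f (n - k) : ℝ) : ℂ) else 0)
      - φ (n + k) / ((f (n + k) - f n : ℝ) : ℂ))

/-- `(φ, ψ)` is in the graph of `T_f`. -/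
def InGraphTf (f : ℕ → ℝ) (φ ψ : l2) : Prop :=
  ∃ h : ∀ m, Memℓp (TfmSeq f m (⇑φ)) 2,
    Tendsto (fun m => (⟨TfmSeq f m (⇑φ), h m⟩ : l2)) atTop (𝓝 ψ)

/-!
Additivity of `T_{f,m}` reduces the claim to the vectors `c ξ_j`. For these, `T_{f,m} (c ξ_j)` is
the truncation to `[j - m, j + m]` of the sequence `n ↦ i c / (f n - f j)` (zero at `n = j`), so
the limit exists as soon as that sequence is square-summable. It is, since
`(f n - f j)⁻² ≤ C² f(n)⁻²` for `n > j` and `∑ f(n)⁻² < ∞`. Density follows because finitely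
supported sequences are dense in `ℓ²`.
-/

lemma MemK.strictMono {f : ℕ → ℝ} (hf : MemK f) : StrictMono f :=
  strictMono_nat_of_lt_succ hf.2

lemma MemK.pos {f : ℕ → ℝ} (hf : MemK f) (n : ℕ) : 0 < f n :=
  hf.1.trans_le (hf.strictMono.monotone n.zero_le)

/-- Past `j` the gaps `f n - f j` stay above `f (j + 1) - f j > 0`, which absorbs the constant
`f j`. -/
lemma MemK.exists_le_mul_sub {f : ℕ → ℝ} (hf : MemK f) (j : ℕ) :
    ∃ C, ∀ n, j < n → f n ≤ C * (f n - f j) := by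
  have hδ : 0 < f (j + 1) - f j := sub_pos.2 (hf.2 j)
  refine ⟨1 + f j / (f (j + 1) - f j), fun n hn => ?_⟩
  have hgap : f (j + 1) - f j ≤ f n - f j := by gcongr; exact hf.strictMono.monotone hn
  have : f j ≤ f j / (f (j + 1) - f j) * (f n - f j) := by
    rw [div_mul_eq_mul_div, le_div_iff₀ hδ]
    exact mul_le_mul_of_nonneg_left hgap (hf.pos j).le
  linarith

lemma MemKminus.summable_inv_sq_sub {f : ℕ → ℝ} (hf : MemKminus f) (j : ℕ) :
    Summable (fun n => ((f n - f j) ^ 2)⁻¹) := by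
  obtain ⟨C, hC⟩ := hf.1.exists_le_mul_sub j
  refine (summable_nat_add_iff (j + 1)).1 <| Summable.of_nonneg_of_le (fun n => by positivity)
    (fun n => ?_) (((summable_nat_add_iff (j + 1)).2 hf.2).mul_left (C ^ 2))
  have hfn := hf.1.pos (n + (j + 1))
  have hsub : 0 < f (n + (j + 1)) - f j := sub_pos.2 (hf.1.strictMono (by omega))
  have hle := hC (n + (j + 1)) (by omega)
  have hC : 0 < C := pos_of_mul_pos_left (hfn.trans_le hle) hsub.le
  calc ((f (n + (j + 1)) - f j) ^ 2)⁻¹ ≤ ((f (n + (j + 1)) / C) ^ 2)⁻¹ := by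
        gcongr; rwa [div_le_iff₀' hC]
    _ = C ^ 2 * (1 / f (n + (j + 1)) ^ 2) := by field_simp

lemma lp.sum_single_apply {α : Type*} [DecidableEq α] {E : α → Type*}
    [∀ i, NormedAddCommGroup (E i)] {p : ℝ≥0∞} (s : Finset α) (g : ∀ i, E i) (n : α) :
    (∑ i ∈ s, lp.single p i (g i)) n = if n ∈ s then g n else 0 := by
  rw [lp.coeFn_sum, Finset.sum_apply]
  exact Finset.sum_pi_single n g s

lemma finSupp_sum_single (s : Finset ℕ) (g : ℕ → ℂ) :
    FinSupp (∑ i ∈ s, lp.single 2 i (g i)) :=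
  s.finite_toSet.subset fun n hn => by
    by_contra h
    exact hn (by rw [lp.sum_single_apply, if_neg (Finset.mem_coe.not.1 h)])

lemma eq_sum_single_of_finSupp {φ : l2} (hφ : FinSupp φ) :
    φ = ∑ i ∈ hφ.toFinset, lp.single 2 i (φ i) :=
  (lp.hasSum_single (by norm_num) φ).unique <| hasSum_sum_of_ne_finset_zero fun i hi => by
    have hφi : φ i = 0 := by_contra fun h => hi (hφ.mem_toFinset.2 h)
    rw [hφi, lp.single_zero]

lemma dense_setOf_finSupp : Dense {φ : l2 | FinSupp φ} := fun φ =>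
  mem_closure_of_tendsto ((lp.hasSum_single (by norm_num) φ).comp tendsto_finset_range)
    (Eventually.of_forall fun M => finSupp_sum_single (Finset.range M) φ)

lemma inGraphTf_of_tendsto {f : ℕ → ℝ} {φ ψ : l2} (x : ℕ → l2)
    (hx : ∀ m, TfmSeq f m ⇑φ = ⇑(x m)) (h : Tendsto x atTop (𝓝 ψ)) : InGraphTf f φ ψ :=
  ⟨fun m => hx m ▸ (x m).2, h.congr fun m => lp.ext (hx m).symm⟩

lemma TfmSeq_zero (f : ℕ → ℝ) (m : ℕ) : TfmSeq f m 0 = 0 := by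
  funext n
  simp [TfmSeq]

lemma TfmSeq_add (f : ℕ → ℝ) (m : ℕ) (φ₁ φ₂ : ℕ → ℂ) :
    TfmSeq f m (φ₁ + φ₂) = TfmSeq f m φ₁ + TfmSeq f m φ₂ := by
  funext n
  simp only [TfmSeq, Pi.add_apply, ← mul_add, ← Finset.sum_add_distrib]
  congr 1
  refine Finset.sum_congr rfl fun k _ => ?_
  split_ifs <;> ring

lemma inGraphTf_zero (f : ℕ → ℝ) : InGraphTf f 0 0 :=
  inGraphTf_of_tendsto (fun _ => 0) (fun m => by rw [lp.coeFn_zero, TfmSeq_zero])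
    tendsto_const_nhds

lemma InGraphTf.add {f : ℕ → ℝ} {φ₁ φ₂ ψ₁ ψ₂ : l2} (h₁ : InGraphTf f φ₁ ψ₁)
    (h₂ : InGraphTf f φ₂ ψ₂) : InGraphTf f (φ₁ + φ₂) (ψ₁ + ψ₂) := by
  obtain ⟨hmem₁, h₁⟩ := h₁
  obtain ⟨hmem₂, h₂⟩ := h₂
  exact inGraphTf_of_tendsto (fun m => ⟨_, hmem₁ m⟩ + ⟨_, hmem₂ m⟩)
    (fun m => by rw [lp.coeFn_add, TfmSeq_add]; rfl) (h₁.add h₂)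

def domainTf (f : ℕ → ℝ) : AddSubmonoid l2 where
  carrier := {φ | ∃ ψ, InGraphTf f φ ψ}
  add_mem' := fun ⟨ψ₁, h₁⟩ ⟨ψ₂, h₂⟩ => ⟨ψ₁ + ψ₂, h₁.add h₂⟩
  zero_mem' := ⟨0, inGraphTf_zero f⟩

/-- The limit of `T_{f,m} (c ξ_j)`. Its `j`-th entry is `0`, through the convention `c / 0 = 0`. -/
def TfSingleSeq (f : ℕ → ℝ) (j : ℕ) (c : ℂ) : ℕ → ℂ := fun n =>
  Complex.I * (c / ((f n - f j : ℝ) : ℂ))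

lemma MemKminus.memℓp_TfSingleSeq {f : ℕ → ℝ} (hf : MemKminus f) (j : ℕ) (c : ℂ) :
    Memℓp (TfSingleSeq f j c) 2 := by
  refine memℓp_gen <| ((hf.summable_inv_sq_sub j).mul_left (‖c‖ ^ 2)).congr fun n => ?_
  rw [TfSingleSeq, ENNReal.toReal_ofNat, Real.rpow_two, norm_mul, Complex.norm_I, one_mul,
    norm_div, Complex.norm_real, Real.norm_eq_abs, div_pow, sq_abs, div_eq_mul_inv]

lemma sum_Icc_ite_add_eq {M : Type*} [AddCommMonoid M] (a b m : ℕ) (x : M) :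
    ∑ k ∈ Finset.Icc 1 m, (if a + k = b then x else 0) = if a < b ∧ b ≤ a + m then x else 0 := by
  split_ifs with h
  · rw [Finset.sum_eq_single_of_mem (b - a) (Finset.mem_Icc.2 (by omega))
      fun k _ hk => if_neg (by omega), if_pos (by omega)]
  · exact Finset.sum_eq_zero fun k hk => if_neg (by rw [Finset.mem_Icc] at hk; omega)

lemma TfmSeq_single (f : ℕ → ℝ) (m j : ℕ) (c : ℂ) (n : ℕ) :
    TfmSeq f m ⇑(lp.single 2 j c) n =
      if n ∈ Finset.Icc (j - m) (j + m) then TfSingleSeq f j c n else 0 := by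
  have hback : ∀ k ∈ Finset.Icc 1 m,
      (if k ≤ n then (Pi.single j c : ℕ → ℂ) (n - k) / ((f n - f (n - k) : ℝ) : ℂ) else 0) =
        if j + k = n then c / ((f n - f j : ℝ) : ℂ) else 0 := by
    intro k _
    by_cases h : j + k = n
    · subst h; simp
    · split_ifs with hk
      · rw [Pi.single_eq_of_ne (by omega), zero_div]
      · rfl
  have hfwd : ∀ k, (Pi.single j c : ℕ → ℂ) (n + k) / ((f (n + k) - f n : ℝ) : ℂ) =
      if n + k = j then -(c / ((f n - f j : ℝ) : ℂ)) else 0 := by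
    intro k
    split_ifs with h
    · subst h
      rw [Pi.single_eq_same, ← div_neg, ← Complex.ofReal_neg, neg_sub]
    · rw [Pi.single_eq_of_ne h, zero_div]
  simp only [TfmSeq, lp.coeFn_single, Finset.sum_sub_distrib, Finset.sum_congr rfl hback, hfwd,
    sum_Icc_ite_add_eq, TfSingleSeq, Finset.mem_Icc]
  rcases eq_or_ne n j with rfl | h
  · simp
  · split_ifs <;> first | omega | ring

lemma tendsto_Icc_sub_add (j : ℕ) :
    Tendsto (fun m => Finset.Icc (j - m) (j + m)) atTop atTop :=
  tendsto_atTop_finset_of_monotone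
    (fun _ _ hab => Finset.Icc_subset_Icc (Nat.sub_le_sub_left hab j) (by omega))
    (fun n => ⟨n + j, Finset.mem_Icc.2 ⟨by omega, by omega⟩⟩)

lemma MemKminus.inGraphTf_single {f : ℕ → ℝ} (hf : MemKminus f) (j : ℕ) (c : ℂ) :
    InGraphTf f (lp.single 2 j c) ⟨TfSingleSeq f j c, hf.memℓp_TfSingleSeq j c⟩ :=
  inGraphTf_of_tendsto (fun m => ∑ i ∈ Finset.Icc (j - m) (j + m), lp.single 2 i _)
    (fun m => funext fun n => by rw [TfmSeq_single, lp.sum_single_apply])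
    ((lp.hasSum_single (by norm_num) _).comp (tendsto_Icc_sub_add j))

/-- If `f ∈ 𝒦⁻`, then every finitely supported `φ ∈ ℓ²(ℕ)` belongs to the
domain of `T_f` (the limit `lim_m T_{f,m} φ` exists in `ℓ²(ℕ)`); in particular the domain of
`T_f` is dense, i.e. `T_f` is densely defined. -/
theorem stmt1 (f : ℕ → ℝ) (hf : MemKminus f) :
    (∀ φ : l2, FinSupp φ → ∃ ψ : l2, InGraphTf f φ ψ) ∧
    Dense {φ : l2 | ∃ ψ : l2, InGraphTf f φ ψ} := by
  have hfin : ∀ φ : l2, FinSupp φ → φ ∈ domainTf f := fun φ hφ => by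
    rw [eq_sum_single_of_finSupp hφ]
    exact sum_mem fun j _ => ⟨_, hf.inGraphTf_single j _⟩
  exact ⟨hfin, dense_setOf_finSupp.mono hfin⟩
end
end

section
/- Let f∈𝒦 and suppose that for every k≥1 one has inf_{n∈ℕ} Δ_k(f,n) > 0 and that ∑_{k≥1} sup_{n∈ℕ} Δ_k(f,n)^{-1} < ∞. Then T_f is an everywhere defined bounded operator on ℓ²(ℕ): D(T_f)=ℓ²(ℕ) and there is a constant such that ‖T_fφ‖ ≤ C‖φ‖ for all φ. In particular T_f is a bounded self-adjoint operator. -/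
open Filter Topology
open scoped ENNReal

noncomputable section

/-
Write `L*^k` and `L^k` for the pushforward and pullback of sequences along `n ↦ n + k`, and `W_k`
for multiplication by the bounded real sequence `Δ_k(f, ·)⁻¹`. The `k`-th summand of `T_{f,m}` is
`A_k = i (L*^k W_k - W_k L^k)`; since `(L*^k)† = L^k` and `W_k` is self-adjoint, `A_k` is a bounded
self-adjoint operator with `‖A_k‖ ≤ 2 sup_n Δ_k(f,n)⁻¹`. The summability hypothesis makes `∑ A_k`
converge in operator norm to a bounded self-adjoint `T`, and `T_{f,m} φ = ∑_{k ≤ m} A_k φ → T φ`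
for every `φ`, so `T_f = T`.
-/

open scoped lp InnerProduct

lemma IsSelfAdjoint.tsum {ι R : Type*} [AddCommMonoid R] [TopologicalSpace R] [StarAddMonoid R]
    [ContinuousStar R] [T2Space R] {A : ι → R} (hA : ∀ i, IsSelfAdjoint (A i)) :
    IsSelfAdjoint (∑' i, A i) := by
  rw [IsSelfAdjoint, tsum_star]
  exact tsum_congr hA

section Extend

variable {ι κ α F : Type*} {e : ι → κ} [AddCommMonoid F] [TopologicalSpace F]

lemma extend_zero_add [AddZeroClass α] (he : Function.Injective e) (φ ψ : ι → α) :
    Function.extend e (φ + ψ) 0 = Function.extend e φ 0 + Function.extend e ψ 0 := by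
  funext n
  rcases em (n ∈ Set.range e) with ⟨i, rfl⟩ | hn
  · simp [he.extend_apply]
  · simp [Function.extend_apply' _ _ _ hn]

lemma extend_zero_smul {M : Type*} [Zero α] [SMulZeroClass M α] (he : Function.Injective e) (c : M)
    (φ : ι → α) : Function.extend e (c • φ) 0 = c • Function.extend e φ 0 := by
  funext n
  rcases em (n ∈ Set.range e) with ⟨i, rfl⟩ | hn
  · simp [he.extend_apply]
  · simp [Function.extend_apply' _ _ _ hn]

variable [Zero α] {g : κ → α → F}

lemma summable_extend_iff (hg : ∀ n, g n 0 = 0) (he : Function.Injective e) (f : ι → α) :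
    Summable (fun n => g n (Function.extend e f 0 n)) ↔ Summable (fun i => g (e i) (f i)) := by
  rw [← he.summable_iff fun n hn => by rw [Function.extend_apply' _ _ _ hn, Pi.zero_apply, hg]]
  simp only [Function.comp_def, he.extend_apply]

lemma tsum_extend (hg : ∀ n, g n 0 = 0) (he : Function.Injective e) (f : ι → α) :
    ∑' n, g n (Function.extend e f 0 n) = ∑' i, g (e i) (f i) := by
  rw [← he.tsum_eq fun n hn => ?_]
  · simp only [he.extend_apply]
  · by_contra hr
    exact hn (by simp only [Function.extend_apply' _ _ _ hr, Pi.zero_apply, hg])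

end Extend

namespace lp

variable {𝕜 : Type*} [RCLike 𝕜] {E : Type*} [NormedAddCommGroup E] [InnerProductSpace 𝕜 E]
  {ι κ : Type*} {e : ι → κ}

lemma memℓp_two_comp (he : Function.Injective e) (φ : ℓ²(κ, E)) : Memℓp (φ ∘ e) 2 :=
  memℓp_gen (((lp.memℓp φ).summable (by norm_num)).comp_injective he)

def pullback (he : Function.Injective e) : ℓ²(κ, E) →L[𝕜] ℓ²(ι, E) :=
  LinearMap.mkContinuous
    { toFun := fun φ => ⟨φ ∘ e, memℓp_two_comp he φ⟩
      map_add' := fun _ _ => rfl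
      map_smul' := fun _ _ => rfl } 1 fun φ => by
    refine lp.norm_le_of_tsum_le (by norm_num) (by positivity) ?_
    rw [one_mul, lp.norm_rpow_eq_tsum (by norm_num) φ]
    exact tsum_comp_le_tsum_of_inj ((lp.memℓp φ).summable (by norm_num)) (fun _ => by positivity) he

lemma memℓp_two_extend (he : Function.Injective e) (φ : ℓ²(ι, E)) :
    Memℓp (Function.extend e φ 0) 2 :=
  memℓp_gen <| (summable_extend_iff (g := fun _ x => ‖x‖ ^ (2 : ℝ≥0∞).toReal)
    (fun _ => by simp) he φ).2 ((lp.memℓp φ).summable (by norm_num))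

def pushforward (he : Function.Injective e) : ℓ²(ι, E) →L[𝕜] ℓ²(κ, E) :=
  LinearMap.mkContinuous
    { toFun := fun φ => ⟨Function.extend e φ 0, memℓp_two_extend he φ⟩
      map_add' := fun φ ψ => lp.ext (extend_zero_add he φ ψ)
      map_smul' := fun c φ => lp.ext (extend_zero_smul he c φ) } 1 fun φ => by
    refine lp.norm_le_of_tsum_le (by norm_num) (by positivity) ?_
    rw [one_mul, lp.norm_rpow_eq_tsum (by norm_num) φ]
    exact (tsum_extend (g := fun _ x => ‖x‖ ^ (2 : ℝ≥0∞).toReal) (fun _ => by simp) he φ).le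

lemma adjoint_pushforward [CompleteSpace E] (he : Function.Injective e) :
    (pushforward (𝕜 := 𝕜) (E := E) he)† = pullback he := by
  refine ((ContinuousLinearMap.eq_adjoint_iff _ _).2 fun φ ψ => ?_).symm
  rw [lp.inner_eq_tsum, lp.inner_eq_tsum]
  exact (tsum_extend (g := fun n x => inner 𝕜 (φ n) x) (fun _ => inner_zero_right _) he ψ).symm

lemma norm_ofReal_apply_smul_le (w : ℓ^∞(ι, ℝ)) (i : ι) (x : E) : ‖(w i : 𝕜) • x‖ ≤ ‖w‖ * ‖x‖ := by
  rw [norm_smul, RCLike.norm_ofReal]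
  exact mul_le_mul_of_nonneg_right (lp.norm_apply_le_norm ENNReal.top_ne_zero w i) (norm_nonneg _)

lemma memℓp_two_diagonal (w : ℓ^∞(ι, ℝ)) (φ : ℓ²(ι, E)) :
    Memℓp (fun i => (w i : 𝕜) • φ i) 2 :=
  (lp.memℓp φ).norm.const_mul ‖w‖ |>.mono fun i => norm_ofReal_apply_smul_le w i (φ i)

def diagonal (w : ℓ^∞(ι, ℝ)) : ℓ²(ι, E) →L[𝕜] ℓ²(ι, E) :=
  LinearMap.mkContinuous
    { toFun := fun φ => ⟨fun i => (w i : 𝕜) • φ i, memℓp_two_diagonal w φ⟩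
      map_add' := fun φ ψ => lp.ext <| funext fun i => smul_add _ _ _
      map_smul' := fun c φ => lp.ext <| funext fun i => smul_comm _ c _ } ‖w‖ fun φ => by
    calc _ ≤ ‖((‖w‖ : ℝ) : 𝕜) • φ‖ := lp.norm_mono two_ne_zero fun i => by
          rw [lp.coeFn_smul, Pi.smul_apply, norm_smul, RCLike.norm_ofReal, abs_norm]
          exact norm_ofReal_apply_smul_le w i (φ i)
      _ = ‖w‖ * ‖φ‖ := by rw [lp.norm_const_smul two_ne_zero, RCLike.norm_ofReal, abs_norm]

lemma diagonal_apply (w : ℓ^∞(ι, ℝ)) (φ : ℓ²(ι, E)) (i : ι) :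
    diagonal (𝕜 := 𝕜) w φ i = (w i : 𝕜) • φ i := rfl

lemma norm_pullback_le (he : Function.Injective e) : ‖pullback (𝕜 := 𝕜) (E := E) he‖ ≤ 1 :=
  LinearMap.mkContinuous_norm_le _ zero_le_one _

lemma norm_pushforward_le (he : Function.Injective e) : ‖pushforward (𝕜 := 𝕜) (E := E) he‖ ≤ 1 :=
  LinearMap.mkContinuous_norm_le _ zero_le_one _

lemma norm_diagonal_le (w : ℓ^∞(ι, ℝ)) : ‖diagonal (𝕜 := 𝕜) (E := E) w‖ ≤ ‖w‖ :=
  LinearMap.mkContinuous_norm_le _ (norm_nonneg w) _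

lemma isSelfAdjoint_diagonal [CompleteSpace E] (w : ℓ^∞(ι, ℝ)) :
    IsSelfAdjoint (diagonal (𝕜 := 𝕜) (E := E) w) := by
  refine ContinuousLinearMap.isSelfAdjoint_iff_isSymmetric.2 fun φ ψ => ?_
  simp only [ContinuousLinearMap.coe_coe, lp.inner_eq_tsum, diagonal_apply, inner_smul_left,
    inner_smul_right, RCLike.conj_ofReal]

end lp

open lp

lemma extend_add_right_apply {E : Type*} [Zero E] (k : ℕ) (g : ℕ → E) (n : ℕ) :
    Function.extend (· + k) g 0 n = if k ≤ n then g (n - k) else 0 := by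
  split_ifs with h
  · conv_lhs => rw [← Nat.sub_add_cancel h]
    exact (add_left_injective k).extend_apply _ _ _
  · refine Function.extend_apply' _ _ _ ?_
    rintro ⟨j, rfl⟩
    exact h (Nat.le_add_left k j)

def shiftTerm (k : ℕ) (w : ℓ^∞(ℕ, ℝ)) : l2 →L[ℂ] l2 :=
  Complex.I • (pushforward (add_left_injective k) * diagonal w -
    diagonal w * pullback (add_left_injective k))

lemma shiftTerm_apply (k : ℕ) (w : ℓ^∞(ℕ, ℝ)) (φ : l2) (n : ℕ) :
    shiftTerm k w φ n = Complex.I *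
      ((if k ≤ n then (w (n - k) : ℂ) * φ (n - k) else 0) - w n * φ (n + k)) := by
  change Complex.I *
    (Function.extend (· + k) (fun i => (w i : ℂ) • φ i) 0 n - (w n : ℂ) • φ (n + k)) = _
  rw [extend_add_right_apply]
  simp only [smul_eq_mul]

lemma isSelfAdjoint_shiftTerm (k : ℕ) (w : ℓ^∞(ℕ, ℝ)) : IsSelfAdjoint (shiftTerm k w) := by
  have hP : star (pushforward (𝕜 := ℂ) (E := ℂ) (add_left_injective k)) =
      pullback (add_left_injective k) := by
    rw [ContinuousLinearMap.star_eq_adjoint, adjoint_pushforward]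
  have hW := isSelfAdjoint_diagonal (𝕜 := ℂ) (E := ℂ) w
  rw [IsSelfAdjoint, shiftTerm, star_smul, star_sub, star_mul, star_mul, hP, hW.star_eq, ← hP,
    star_star, Complex.star_def, Complex.conj_I, neg_smul, ← smul_neg, neg_sub]

lemma norm_shiftTerm_le (k : ℕ) (w : ℓ^∞(ℕ, ℝ)) : ‖shiftTerm k w‖ ≤ 2 * ‖w‖ := by
  set P := pushforward (𝕜 := ℂ) (E := ℂ) (add_left_injective k)
  set Q := pullback (𝕜 := ℂ) (E := ℂ) (add_left_injective k)
  set W := diagonal (𝕜 := ℂ) (E := ℂ) w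
  have hP : ‖P‖ ≤ 1 := norm_pushforward_le _
  have hQ : ‖Q‖ ≤ 1 := norm_pullback_le _
  have hW : ‖W‖ ≤ ‖w‖ := norm_diagonal_le w
  calc ‖shiftTerm k w‖ ≤ ‖P‖ * ‖W‖ + ‖W‖ * ‖Q‖ := by
        rw [shiftTerm, norm_smul, Complex.norm_I, one_mul]
        exact norm_sub_le_of_le (norm_mul_le _ _) (norm_mul_le _ _)
    _ ≤ 1 * ‖w‖ + ‖w‖ * 1 := by gcongr
    _ = 2 * ‖w‖ := by ring

-- In `ℝ` an infimum that is not bounded below is `0`, so a positive infimum is a genuine lower bound.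
lemma Real.iInf_le_of_iInf_pos {ι : Type*} {u : ι → ℝ} (h : 0 < ⨅ i, u i) (i : ι) :
    ⨅ i, u i ≤ u i :=
  ciInf_le (not_not.1 fun hb => h.ne' (Real.iInf_of_not_bddBelow hb)) i

section DeltaInv

variable {f : ℕ → ℝ} {k : ℕ}

lemma sub_pos_of_iInf_pos (h : 0 < ⨅ n, f (n + k) - f n) (n : ℕ) : 0 < f (n + k) - f n :=
  h.trans_le (Real.iInf_le_of_iInf_pos h n)

lemma abs_inv_sub_le (h : 0 < ⨅ n, f (n + k) - f n) (n : ℕ) :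
    |(f (n + k) - f n)⁻¹| ≤ (⨅ n, f (n + k) - f n)⁻¹ := by
  rw [abs_inv, abs_of_pos (sub_pos_of_iInf_pos h n)]
  exact inv_anti₀ h (Real.iInf_le_of_iInf_pos h n)

def deltaInv (f : ℕ → ℝ) (k : ℕ) (h : 0 < ⨅ n, f (n + k) - f n) : ℓ^∞(ℕ, ℝ) :=
  ⟨fun n => (f (n + k) - f n)⁻¹, memℓp_infty ⟨_, Set.forall_mem_range.2 (abs_inv_sub_le h)⟩⟩

lemma norm_deltaInv_le (h : 0 < ⨅ n, f (n + k) - f n) :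
    ‖deltaInv f k h‖ ≤ ⨆ n, (f (n + k) - f n)⁻¹ := by
  have hbdd : BddAbove (Set.range fun n => (f (n + k) - f n)⁻¹) :=
    ⟨_, Set.forall_mem_range.2 fun n => (le_abs_self _).trans (abs_inv_sub_le h n)⟩
  have hnorm (n : ℕ) : ‖deltaInv f k h n‖ = (f (n + k) - f n)⁻¹ :=
    abs_of_pos (inv_pos.2 (sub_pos_of_iInf_pos h n))
  refine lp.norm_le_of_forall_le ((norm_nonneg _).trans ((hnorm 0).trans_le (le_ciSup hbdd 0))) ?_
  exact fun n => (hnorm n).trans_le (le_ciSup hbdd n)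

end DeltaInv

section Tf

variable {f : ℕ → ℝ} (hinf : ∀ k : ℕ, 1 ≤ k → 0 < ⨅ n : ℕ, (f (n + k) - f n))

def tfSummand (k : ℕ) : l2 →L[ℂ] l2 :=
  shiftTerm (k + 1) (deltaInv f (k + 1) (hinf (k + 1) (Nat.le_add_left 1 k)))

lemma coe_sum_tfSummand_apply (m : ℕ) (φ : l2) :
    ⇑(∑ k ∈ Finset.range m, tfSummand hinf k φ) = TfmSeq f m φ := by
  funext n
  rw [lp.coeFn_sum, Finset.sum_apply, TfmSeq, ← Finset.Ico_add_one_right_eq_Icc,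
    Finset.sum_Ico_eq_sum_range, Nat.add_sub_cancel, Finset.mul_sum]
  refine Finset.sum_congr rfl fun k _ => ?_
  rw [tfSummand, shiftTerm_apply, add_comm 1 k]
  congr 2
  · split_ifs with hk
    · simp [deltaInv, Nat.sub_add_cancel hk, div_eq_inv_mul]
    · rfl
  · simp [deltaInv, div_eq_inv_mul]

end Tf

lemma inGraphTf_iff_tendsto {f : ℕ → ℝ} {φ ψ : l2} {S : ℕ → l2}
    (hS : ∀ m, ⇑(S m) = TfmSeq f m φ) : InGraphTf f φ ψ ↔ Tendsto S atTop (𝓝 ψ) := by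
  have hseq (h : ∀ m, Memℓp (TfmSeq f m φ) 2) : (fun m => (⟨TfmSeq f m φ, h m⟩ : l2)) = S :=
    funext fun m => lp.ext (hS m).symm
  exact ⟨fun ⟨h, ht⟩ => hseq h ▸ ht, fun ht => ⟨fun m => hS m ▸ lp.memℓp (S m), (hseq _).symm ▸ ht⟩⟩

theorem stmt4_general (f : ℕ → ℝ)
    (hinf : ∀ k : ℕ, 1 ≤ k → 0 < ⨅ n : ℕ, (f (n + k) - f n))
    (hsum : Summable (fun k : ℕ => ⨆ n : ℕ, (f (n + (k + 1)) - f n)⁻¹)) :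
    ∃ C : ℝ, ∀ φ : l2, ∃ Tφ : l2, InGraphTf f φ Tφ ∧ ‖Tφ‖ ≤ C * ‖φ‖ ∧
      ∀ ψ Tψ : l2, InGraphTf f ψ Tψ → (inner ℂ Tφ ψ : ℂ) = inner ℂ φ Tψ := by
  have hA : Summable (tfSummand hinf) := .of_norm_bounded (hsum.mul_left 2) fun k =>
    (norm_shiftTerm_le _ _).trans (by gcongr; exact norm_deltaInv_le _)
  set T := ∑' k, tfSummand hinf k
  have hT : IsSelfAdjoint T := .tsum fun k => isSelfAdjoint_shiftTerm _ _
  have hgraph (φ ψ : l2) : InGraphTf f φ ψ ↔ ψ = T φ := by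
    have hlim := (hA.hasSum.mapL (ContinuousLinearMap.apply ℂ l2 φ)).tendsto_sum_nat
    rw [inGraphTf_iff_tendsto (coe_sum_tfSummand_apply hinf · φ)]
    exact ⟨fun h => tendsto_nhds_unique h hlim, fun h => h ▸ hlim⟩
  refine ⟨‖T‖, fun φ => ⟨T φ, (hgraph φ _).2 rfl, T.le_opNorm φ, fun ψ Tψ hψ => ?_⟩⟩
  rw [(hgraph ψ Tψ).1 hψ]
  exact hT.isSymmetric φ ψ

/-- Let `f ∈ 𝒦`. Suppose `inf_n Δ_k(f,n) > 0` for every `k ≥ 1` and that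
`∑_{k ≥ 1} sup_n Δ_k(f,n)⁻¹ < ∞`. Then `T_f` is everywhere defined and bounded:
`D(T_f) = ℓ²(ℕ)` and `‖T_f φ‖ ≤ C ‖φ‖`; moreover (being symmetric) `T_f` is self-adjoint. -/
theorem stmt4 (f : ℕ → ℝ) (hf : MemK f)
    (hinf : ∀ k : ℕ, 1 ≤ k → 0 < ⨅ n : ℕ, (f (n + k) - f n))
    (hsum : Summable (fun k : ℕ => ⨆ n : ℕ, (f (n + (k + 1)) - f n)⁻¹)) :
    ∃ C : ℝ, ∀ φ : l2, ∃ Tφ : l2, InGraphTf f φ Tφ ∧ ‖Tφ‖ ≤ C * ‖φ‖ ∧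
      ∀ ψ Tψ : l2, InGraphTf f ψ Tψ → (inner ℂ Tφ ψ : ℂ) = inner ℂ φ Tψ :=
  stmt4_general f hinf hsum
end
end

section
/- Let f∈𝒦⁻ and suppose inf_{n∈ℕ}(f(n+1)−f(n)) = 0. Then T_f is unbounded: there is no constant C such that ‖T_fφ‖ ≤ C‖φ‖ for all φ∈ℓ²_fin(ℕ). -/
open Filter Topology
open scoped ENNReal

noncomputable section

/-!
`T_f ξ_n` is the column `j ↦ i / (f j - f n)` (zero at `j = n`): every truncation `T_{f,m} ξ_n`
is a finite piece of it, and the column is square-summable because `f ∈ 𝒦⁻` forces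
`f j ≥ 2 f n` for large `j`, so its entries are eventually bounded by `2 / f j`. Its entry at
`n + 1` has modulus `1 / (f (n + 1) - f n)`, so a bound `C` on `T_f` would force every gap
`f (n + 1) - f n` to be at least `1 / C`, contradicting that their infimum is `0`.
-/

namespace MemK

variable {f : ℕ → ℝ}

lemma strictMono_s5 (hf : MemK f) : StrictMono f :=
  strictMono_nat_of_lt_succ hf.2

lemma pos_s5 (hf : MemK f) (n : ℕ) : 0 < f n :=
  hf.1.trans_le (hf.strictMono_s5.monotone n.zero_le)

lemma sub_pos_succ (hf : MemK f) (n : ℕ) : 0 < f (n + 1) - f n :=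
  sub_pos.2 (hf.2 n)

end MemK

lemma MemKminus.tendsto_atTop {f : ℕ → ℝ} (hf : MemKminus f) : Tendsto f atTop atTop := by
  refine Filter.tendsto_atTop.2 fun c => ?_
  have hb : 0 < max c 1 := lt_max_of_lt_right one_pos
  have hsmall := hf.2.tendsto_atTop_zero.eventually
    (gt_mem_nhds (by positivity : 0 < 1 / max c 1 ^ 2))
  filter_upwards [hsmall] with j hj
  have hfj := hf.1.pos_s5 j
  have : max c 1 < f j := by
    rw [one_div_lt_one_div (by positivity) (by positivity)] at hj
    exact (pow_lt_pow_iff_left₀ hb.le hfj.le two_ne_zero).1 hj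
  exact (le_max_left _ _).trans this.le

/-- The image `T_f ξ_n`; its diagonal entry vanishes because `x / 0 = 0`. -/
def tfColumn (f : ℕ → ℝ) (n : ℕ) : ℕ → ℂ := fun j => Complex.I / ((f j - f n : ℝ) : ℂ)

lemma norm_tfColumn (f : ℕ → ℝ) (n j : ℕ) : ‖tfColumn f n j‖ = |f j - f n|⁻¹ := by
  rw [tfColumn, norm_div, Complex.norm_I, Complex.norm_real, Real.norm_eq_abs, one_div]

lemma memℓp_tfColumn {f : ℕ → ℝ} (hf : MemKminus f) (n : ℕ) : Memℓp (tfColumn f n) 2 := by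
  refine memℓp_gen <| (hf.2.mul_left 4).of_norm_bounded_eventually_nat ?_
  filter_upwards [hf.tendsto_atTop.eventually_ge_atTop (2 * f n)] with j hj
  have hfj := hf.1.pos_s5 j
  have hgap : f j / 2 ≤ f j - f n := by linarith [hf.1.pos_s5 n]
  rw [ENNReal.toReal_ofNat, Real.rpow_two, norm_pow, norm_norm, norm_tfColumn,
    abs_of_pos (by linarith)]
  calc (f j - f n)⁻¹ ^ 2 = 1 / (f j - f n) ^ 2 := by rw [inv_pow, one_div]
    _ ≤ 1 / (f j / 2) ^ 2 :=
      one_div_le_one_div_of_le (by positivity) (pow_le_pow_left₀ (by positivity) hgap 2)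
    _ = 4 * (1 / f j ^ 2) := by ring

lemma xi_apply (n j : ℕ) : (xi n : ℕ → ℂ) j = if j = n then 1 else 0 := by
  simp [xi, lp.single_apply, Pi.single_apply]

lemma norm_xi (n : ℕ) : ‖xi n‖ = 1 := by
  simp [xi, lp.norm_single]

lemma finSupp_xi (n : ℕ) : FinSupp (xi n) :=
  (Set.finite_singleton n).subset fun j hj => by
    by_contra h
    exact hj (by simpa [xi_apply] using h)

open Finset in
lemma TfmSeq_xi_apply (f : ℕ → ℝ) (n m j : ℕ) :
    TfmSeq f m (xi n) j = if j ∈ Icc (n - m) (n + m) then tfColumn f n j else 0 := by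
  -- for `k ≥ 1` the truncated differences `j - n = k`, `n - j = k` locate the single nonzero term
  have hterm : ∀ k ∈ Icc 1 m,
      ((if k ≤ j then (xi n : ℕ → ℂ) (j - k) / ((f j - f (j - k) : ℝ) : ℂ) else 0)
        - (xi n : ℕ → ℂ) (j + k) / ((f (j + k) - f j : ℝ) : ℂ))
      = (if j - n = k then 1 / ((f j - f n : ℝ) : ℂ) else 0)
        - (if n - j = k then 1 / ((f n - f j : ℝ) : ℂ) else 0) := by
    intro k hk
    rw [mem_Icc] at hk
    simp only [xi_apply]
    congr 1
    · by_cases h : j - n = k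
      · rw [if_pos (by omega), if_pos (by omega), if_pos h, show j - k = n by omega]
      · rw [if_neg h]; split_ifs <;> first | omega | simp
    · by_cases h : n - j = k
      · rw [if_pos (by omega), if_pos h, show j + k = n by omega]
      · rw [if_neg h, if_neg (by omega), zero_div]
  rw [TfmSeq, sum_congr rfl hterm, sum_sub_distrib, sum_ite_eq, sum_ite_eq]
  rcases lt_trichotomy j n with hj | rfl | hj
  · have hmem : n - j ∈ Icc 1 m ↔ j ∈ Icc (n - m) (n + m) := by simp only [mem_Icc]; omega
    rw [if_neg (show j - n ∉ Icc 1 m by simp only [mem_Icc]; omega), if_congr hmem rfl rfl]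
    split_ifs
    · rw [tfColumn, ← neg_sub (f n), Complex.ofReal_neg, div_neg, zero_sub, mul_neg, mul_one_div]
    · simp
  · simp [tfColumn]
  · have hmem : j - n ∈ Icc 1 m ↔ j ∈ Icc (n - m) (n + m) := by simp only [mem_Icc]; omega
    rw [if_neg (show n - j ∉ Icc 1 m by simp only [mem_Icc]; omega), if_congr hmem rfl rfl]
    split_ifs
    · rw [tfColumn, sub_zero, mul_one_div]
    · simp

open Finset in
lemma inGraphTf_xi {f : ℕ → ℝ} (hf : MemKminus f) (n : ℕ) :
    InGraphTf f (xi n) ⟨tfColumn f n, memℓp_tfColumn hf n⟩ := by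
  set ψ : l2 := ⟨tfColumn f n, memℓp_tfColumn hf n⟩
  have hpartial : ∀ m, TfmSeq f m (xi n) = ⇑(∑ j ∈ Icc (n - m) (n + m), lp.single 2 j (ψ j)) := by
    intro m
    funext j
    rw [TfmSeq_xi_apply, lp.coeFn_sum, Finset.sum_apply]
    simp only [lp.single_apply, Pi.single_apply, sum_ite_eq]
    rfl
  refine ⟨fun m => hpartial m ▸ (_ : l2).2, ?_⟩
  have hIcc : Tendsto (fun m => Icc (n - m) (n + m)) atTop atTop :=
    tendsto_atTop_finset_of_monotone (fun a b hab => Icc_subset_Icc (by omega) (by omega))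
      fun x => ⟨n + x, by simp only [mem_Icc]; omega⟩
  convert (lp.hasSum_single (by norm_num) ψ).comp hIcc using 2 with m
  exact Subtype.ext (hpartial m)

/-- Let `f ∈ 𝒦⁻` with `inf_n (f (n+1) - f n) = 0`. Then `T_f` is unbounded:
there is no constant `C` with `‖T_f φ‖ ≤ C ‖φ‖` for all finitely supported `φ`. -/
theorem stmt5 (f : ℕ → ℝ) (hf : MemKminus f)
    (hinf : (⨅ n : ℕ, (f (n + 1) - f n)) = 0) :
    ¬ ∃ C : ℝ, ∀ φ Tφ : l2, FinSupp φ → InGraphTf f φ Tφ → ‖Tφ‖ ≤ C * ‖φ‖ := by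
  rintro ⟨C, hC⟩
  have hgap := hf.1.sub_pos_succ
  have hbound : ∀ n, (f (n + 1) - f n)⁻¹ ≤ C := fun n =>
    calc (f (n + 1) - f n)⁻¹ = ‖tfColumn f n (n + 1)‖ := by
          rw [norm_tfColumn, abs_of_pos (hgap n)]
      _ ≤ ‖(⟨tfColumn f n, memℓp_tfColumn hf n⟩ : l2)‖ :=
          lp.norm_apply_le_norm two_ne_zero (⟨tfColumn f n, memℓp_tfColumn hf n⟩ : l2) (n + 1)
      _ ≤ C * ‖xi n‖ := hC _ _ (finSupp_xi n) (inGraphTf_xi hf n)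
      _ = C := by rw [norm_xi, mul_one]
  have hCpos : 0 < C := (inv_pos.2 (hgap 0)).trans_le (hbound 0)
  have hC_le_inf : C⁻¹ ≤ ⨅ n : ℕ, (f (n + 1) - f n) :=
    le_ciInf fun n => (inv_le_comm₀ (hgap n) hCpos).1 (hbound n)
  exact (inv_pos.2 hCpos).not_ge (hinf ▸ hC_le_inf)
end
end

section
/- Let f∈𝓜_s(1). Then T_f is relatively bounded with respect to f(N): there exists a constant a>0 such that ‖T_fφ‖ ≤ a‖f(N)φ‖ for all φ∈ℓ²_fin(ℕ). -/
open Filter Topology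
open scoped ENNReal

noncomputable section

/-- The conditions that `g, h` witness membership of `f` in `𝓜(β)`:
`g : ℕ → (0,∞)`, `h ∈ ℓ¹(ℕ_{≥1})`, `∑_n f(n)²/g(n) < ∞`, and
`g(n) / (f(n)^β Δ_k(f², n))² ≤ h(k)²` for all `n` and all `k ≥ 1`. -/
def MWitness (β : ℝ) (f g h : ℕ → ℝ) : Prop :=
  (∀ n, 0 < g n) ∧
  Summable (fun k : ℕ => |h (k + 1)|) ∧
  Summable (fun n => (f n) ^ 2 / g n) ∧
  ∀ n k : ℕ, 1 ≤ k →
    g n / (Real.rpow (f n) β * ((f (n + k)) ^ 2 - (f n) ^ 2)) ^ 2 ≤ (h k) ^ 2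

/-- The class `𝓜(β)`. -/
def MemM (β : ℝ) (f : ℕ → ℝ) : Prop := MemKminus f ∧ ∃ g h : ℕ → ℝ, MWitness β f g h

/-- The class `𝓜_s(β)`: as `𝓜(β)`, with a uniform bound `C` on the sums
`∑_{k=1}^n g(n) / (f(n-k)^β (f(n)² - f(n-k)²))²` for the same witness `g`. -/
def MemMs (β : ℝ) (f : ℕ → ℝ) : Prop :=
  MemKminus f ∧ ∃ g h : ℕ → ℝ, MWitness β f g h ∧
    ∃ C : ℝ, 0 < C ∧ ∀ n : ℕ,
      (∑ k ∈ Finset.Icc 1 n,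
        g n / (Real.rpow (f (n - k)) β * ((f n) ^ 2 - (f (n - k)) ^ 2)) ^ 2) < C


private lemma summable_fin (F : ℕ → ℝ) (N : ℕ) (h : ∀ n, N ≤ n → F n = 0) : Summable F :=
  summable_of_ne_finset_zero (s := Finset.range N) fun n hn => h n (by simpa using hn)

private lemma memℓp_two_fin (F : ℕ → ℂ) (N : ℕ) (h : ∀ n, N ≤ n → F n = 0) : Memℓp F 2 := by
  apply memℓp_gen
  apply summable_fin _ N
  intro n hn; simp [h n hn]

private lemma l2norm_sq (x : l2) : ‖x‖ ^ 2 = ∑' n, ‖x n‖ ^ 2 := by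
  have h := lp.norm_rpow_eq_tsum (p := 2) (E := fun _ : ℕ => ℂ) (by norm_num) x
  simp only [ENNReal.toReal_ofNat] at h
  rw [show ((2:ℝ)) = ((2:ℕ):ℝ) by norm_num] at h
  simpa only [Real.rpow_natCast] using h

private lemma l2norm_le (x : l2) {K : ℝ} (hK : 0 ≤ K) (h : ∑' n, ‖x n‖ ^ 2 ≤ K ^ 2) : ‖x‖ ≤ K := by
  nlinarith [l2norm_sq x, norm_nonneg x]

set_option maxHeartbeats 1000000 in
/-- Let `f ∈ 𝓜_s(1)`. Then `T_f` is relatively bounded with respect to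
`f(N)`: there is `a > 0` with `‖T_f φ‖ ≤ a ‖f(N) φ‖` for all finitely supported `φ`. -/
theorem stmt11 (f : ℕ → ℝ) (hf : MemMs 1 f) :
    ∃ a : ℝ, 0 < a ∧ ∀ φ : l2, FinSupp φ → ∀ Tφ : l2, InGraphTf f φ Tφ →
      ∃ hb : Memℓp (mulSeq f ⇑φ) 2,
        ‖Tφ‖ ≤ a * ‖(⟨mulSeq f ⇑φ, hb⟩ : l2)‖ := by
  obtain ⟨⟨⟨hf0, hstep⟩, -⟩, g, h, ⟨hg, hh, hfg, hwit⟩, C, hC, hCs⟩ := hf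
  have hfmono : StrictMono f := strictMono_nat_of_lt_succ hstep
  have hfpos : ∀ n, 0 < f n := fun n => lt_of_lt_of_le hf0 (hfmono.monotone (Nat.zero_le n))
  obtain ⟨M, hMub⟩ := hfg.tendsto_atTop_zero.bddAbove_range
  have hM' : ∀ n, f n ^ 2 / g n ≤ M := fun n => hMub (Set.mem_range_self n)
  have hM0 : 0 ≤ M := le_trans (div_nonneg (sq_nonneg _) (hg 0).le) (hM' 0)
  have rpow1 : ∀ x : ℝ, Real.rpow x 1 = x := fun x => Real.rpow_one x
  have hfnsq : ∀ n, f n ^ 2 ≤ M * g n := fun n => (div_le_iff₀ (hg n)).mp (hM' n)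
  -- key1
  have key1 : ∀ n k, 1 ≤ k → 1 / (f (n+k) ^ 2 - f n ^ 2) ≤ |h k| * Real.sqrt M := by
    intro n k hk
    have hlt : f n < f (n + k) := hfmono (by omega)
    have hd : 0 < f (n+k) ^ 2 - f n ^ 2 := by nlinarith [hfpos n]
    have hD : 0 < f n * (f (n+k) ^ 2 - f n ^ 2) := mul_pos (hfpos n) hd
    have hw := hwit n k hk
    rw [rpow1] at hw
    have h1 : g n ≤ h k ^ 2 * (f n * (f (n+k) ^ 2 - f n ^ 2)) ^ 2 := by
      rw [div_le_iff₀ (by positivity)] at hw; linarith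
    have h2 : Real.sqrt (g n) ≤ |h k| * (f n * (f (n+k) ^ 2 - f n ^ 2)) := by
      have h2' := Real.sqrt_le_sqrt h1
      rwa [Real.sqrt_mul (sq_nonneg _), Real.sqrt_sq_eq_abs, Real.sqrt_sq hD.le] at h2'
    have h3 : f n ≤ Real.sqrt M * Real.sqrt (g n) := by
      rw [← Real.sqrt_mul hM0 (g n), ← Real.sqrt_sq (hfpos n).le]
      exact Real.sqrt_le_sqrt (hfnsq n)
    have h4 : f n ≤ Real.sqrt M * (|h k| * (f n * (f (n+k) ^ 2 - f n ^ 2))) :=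
      h3.trans (mul_le_mul_of_nonneg_left h2 (Real.sqrt_nonneg M))
    rw [div_le_iff₀ hd]
    nlinarith [hfpos n, mul_nonneg (Real.sqrt_nonneg M) (abs_nonneg (h k))]
  -- keyB
  have keyB : ∀ n k, 1 ≤ k → 1 / (f (n+k) - f n) ≤ 2 * Real.sqrt M * |h k| * f (n+k) := by
    intro n k hk
    have hlt : f n < f (n + k) := hfmono (by omega)
    have hd : 0 < f (n+k) ^ 2 - f n ^ 2 := by nlinarith [hfpos n]
    have h1 := key1 n k hk
    rw [div_le_iff₀ (by linarith)]
    rw [div_le_iff₀ hd] at h1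
    nlinarith [mul_nonneg (mul_nonneg (Real.sqrt_nonneg M) (abs_nonneg (h k)))
      (sq_nonneg (f (n+k) - f n)), hfpos n]
  -- keyA
  have keyA : ∀ n k, 1 ≤ k → k ≤ n →
      1 / (f (n-k) * (f n - f (n-k))) ≤ 2 * f n * (1 / (f (n-k) * (f n ^ 2 - f (n-k) ^ 2))) := by
    intro n k hk1 hkn
    have ha := hfpos (n-k)
    have hb := hfpos n
    have hlt : f (n-k) < f n := hfmono (by omega)
    have h2 : 0 < f n ^ 2 - f (n-k) ^ 2 := by nlinarith
    rw [mul_one_div, div_le_div_iff₀ (mul_pos ha (by linarith)) (mul_pos ha h2)]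
    nlinarith [mul_nonneg ha.le (sq_nonneg (f n - f (n-k)))]
  -- key2
  have key2 : ∀ n, ∑ k ∈ Finset.Icc 1 n, (1 / (f (n-k) * (f n ^ 2 - f (n-k) ^ 2))) ^ 2 ≤ C / g n := by
    intro n
    have h0 := hCs n
    simp only [rpow1] at h0
    have heq : ∑ k ∈ Finset.Icc 1 n, (1 / (f (n-k) * (f n ^ 2 - f (n-k) ^ 2))) ^ 2
        = (∑ k ∈ Finset.Icc 1 n, g n / (f (n-k) * (f n ^ 2 - f (n-k) ^ 2)) ^ 2) / g n := by
      rw [Finset.sum_div]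
      refine Finset.sum_congr rfl fun k hk => ?_
      obtain ⟨hk1, hkn⟩ := Finset.mem_Icc.mp hk
      have hlt : f (n-k) < f n := hfmono (by omega)
      have ha := hfpos (n-k)
      have h2 : 0 < f n ^ 2 - f (n-k) ^ 2 := by nlinarith
      field_simp [(mul_pos ha h2).ne', (hg n).ne']
    rw [heq, div_le_div_iff₀ (hg n) (hg n)]
    nlinarith [hg n]
  -- constants
  set S : ℝ := ∑' n, f n ^ 2 / g n with hSdef
  have hS0 : 0 ≤ S := tsum_nonneg fun n => div_nonneg (sq_nonneg _) (hg n).le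
  set H : ℝ := ∑' k, |h (k + 1)| with hHdef
  have hH0 : 0 ≤ H := tsum_nonneg fun _ => abs_nonneg _
  set cA : ℝ := 2 * Real.sqrt (C * S) with hcAdef
  set cB : ℝ := 2 * Real.sqrt M * H with hcBdef
  have hcA : 0 ≤ cA := by positivity
  have hcB : 0 ≤ cB := mul_nonneg (by positivity) hH0
  refine ⟨cA + cB + 1, by linarith, ?_⟩
  intro φ hφ Tφ hTφ
  obtain ⟨Nb, hNb⟩ := hφ.bddAbove
  have hφ0 : ∀ n, Nb + 1 ≤ n → (⇑φ : ℕ → ℂ) n = 0 := by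
    intro n hn
    by_contra hne
    exact absurd (hNb (Function.mem_support.mpr hne)) (by omega)
  set N : ℕ := Nb + 1 with hNdef
  have hb : Memℓp (mulSeq f ⇑φ) 2 :=
    memℓp_two_fin _ N (fun n hn => by simp [mulSeq, hφ0 n hn])
  refine ⟨hb, ?_⟩
  set ul : l2 := (⟨mulSeq f ⇑φ, hb⟩ : l2) with huldef
  set u : ℕ → ℝ := fun n => ‖mulSeq f (⇑φ) n‖ with hudef
  have hu_eq : ∀ n, u n = f n * ‖(⇑φ : ℕ → ℂ) n‖ := by
    intro n
    simp [hudef, mulSeq, norm_mul, Complex.norm_real, Real.norm_eq_abs,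
      abs_of_pos (hfpos n)]
  have hu_sum : Summable (fun n => u n ^ 2) :=
    summable_fin _ N (fun n hn => by simp [hudef, mulSeq, hφ0 n hn])
  set U : ℝ := ∑' n, u n ^ 2 with hUdef
  have hU0 : 0 ≤ U := tsum_nonneg fun n => sq_nonneg _
  have hulU : ‖ul‖ ^ 2 = U := by rw [l2norm_sq]
  have hul0 : (0:ℝ) ≤ ‖ul‖ := norm_nonneg _
  -- main uniform bound
  have main : ∀ (m : ℕ) (hm : Memℓp (TfmSeq f m ⇑φ) 2),
      ‖(⟨TfmSeq f m ⇑φ, hm⟩ : l2)‖ ≤ (cA + cB) * ‖ul‖ := by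
    intro m hm
    classical
    set AS : ℕ → ℂ := fun n => ∑ k ∈ Finset.Icc 1 m,
      (if k ≤ n then (⇑φ : ℕ → ℂ) (n-k) / ((f n - f (n-k) : ℝ) : ℂ) else 0) with hASdef
    set Bkf : ℕ → ℕ → ℂ := fun k n =>
      (⇑φ : ℕ → ℂ) (n+k) / ((f (n+k) - f n : ℝ) : ℂ) with hBkfdef
    have zeroA : ∀ n, N + m ≤ n → AS n = 0 := by
      intro n hn
      apply Finset.sum_eq_zero
      intro k hk
      obtain ⟨hk1, hkm⟩ := Finset.mem_Icc.mp hk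
      have hz : (⇑φ : ℕ → ℂ) (n - k) = 0 := hφ0 _ (by omega)
      simp [hz]
    have hASmem : Memℓp AS 2 := memℓp_two_fin _ (N + m) zeroA
    have hBkmem : ∀ k, Memℓp (Bkf k) 2 := fun k =>
      memℓp_two_fin _ N (fun n hn => by simp [hBkfdef, hφ0 (n+k) (by omega)])
    set ASl : l2 := (⟨AS, hASmem⟩ : l2) with hASldef
    set Bkl : ℕ → l2 := fun k => (⟨Bkf k, hBkmem k⟩ : l2) with hBkldef
    set BSl : l2 := ∑ k ∈ Finset.Icc 1 m, Bkl k with hBSldef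
    have hBScoe : ∀ n, (⇑BSl : ℕ → ℂ) n = ∑ k ∈ Finset.Icc 1 m, Bkf k n := by
      intro n
      rw [hBSldef, lp.coeFn_sum]
      simp [hBkldef]
    have hTeq : (⟨TfmSeq f m ⇑φ, hm⟩ : l2) = Complex.I • (ASl - BSl) := by
      apply lp.ext
      funext n
      have h1 : (⇑(Complex.I • (ASl - BSl)) : ℕ → ℂ) n
          = Complex.I * ((⇑ASl : ℕ → ℂ) n - (⇑BSl : ℕ → ℂ) n) := by
        rw [lp.coeFn_smul, Pi.smul_apply, lp.coeFn_sub, Pi.sub_apply, smul_eq_mul]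
      show TfmSeq f m (⇑φ) n = _
      rw [h1, hBScoe]
      show Complex.I * _ = _
      rw [Finset.sum_sub_distrib]
    rw [hTeq, norm_smul, Complex.norm_I, one_mul]
    -- bound on B parts
    have hBk_norm : ∀ k ∈ Finset.Icc 1 m, ‖Bkl k‖ ≤ 2 * Real.sqrt M * |h k| * ‖ul‖ := by
      intro k hk
      obtain ⟨hk1, -⟩ := Finset.mem_Icc.mp hk
      apply l2norm_le _ (by positivity)
      have hpt : ∀ n, ‖Bkf k n‖ ^ 2 ≤ (2 * Real.sqrt M * |h k|) ^ 2 * u (n+k) ^ 2 := by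
        intro n
        have hlt : f n < f (n + k) := hfmono (by omega)
        have h1 : ‖Bkf k n‖ ≤ 2 * Real.sqrt M * |h k| * u (n+k) := by
          rw [hBkfdef]
          simp only []
          rw [norm_div, Complex.norm_real, Real.norm_eq_abs, abs_of_pos (by linarith)]
          rw [hu_eq (n+k)]
          calc ‖(⇑φ : ℕ → ℂ) (n+k)‖ / (f (n+k) - f n)
              = ‖(⇑φ : ℕ → ℂ) (n+k)‖ * (1 / (f (n+k) - f n)) := by ring
            _ ≤ ‖(⇑φ : ℕ → ℂ) (n+k)‖ * (2 * Real.sqrt M * |h k| * f (n+k)) :=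
                mul_le_mul_of_nonneg_left (keyB n k hk1) (norm_nonneg _)
            _ = 2 * Real.sqrt M * |h k| * (f (n+k) * ‖(⇑φ : ℕ → ℂ) (n+k)‖) := by ring
        calc ‖Bkf k n‖ ^ 2 ≤ (2 * Real.sqrt M * |h k| * u (n+k)) ^ 2 :=
              pow_le_pow_left₀ (norm_nonneg _) h1 2
          _ = (2 * Real.sqrt M * |h k|) ^ 2 * u (n+k) ^ 2 := by ring
      have hsum1 : Summable (fun n => ‖Bkf k n‖ ^ 2) :=
        summable_fin _ N (fun n hn => by simp [hBkfdef, hφ0 (n+k) (by omega)])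
      have hsum2 : Summable (fun n => (2 * Real.sqrt M * |h k|) ^ 2 * u (n+k) ^ 2) :=
        (hu_sum.comp_injective (add_left_injective k)).mul_left _
      have hshift : ∑' n, (2 * Real.sqrt M * |h k|) ^ 2 * u (n+k) ^ 2
          ≤ (2 * Real.sqrt M * |h k|) ^ 2 * U := by
        rw [tsum_mul_left]
        refine mul_le_mul_of_nonneg_left ?_ (sq_nonneg _)
        exact Summable.tsum_le_tsum_of_inj (fun n => n + k) (add_left_injective k)
          (fun c _ => sq_nonneg _) (fun n => le_refl _)
          (hu_sum.comp_injective (add_left_injective k)) hu_sum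
      calc ∑' n, ‖(⇑(Bkl k) : ℕ → ℂ) n‖ ^ 2 = ∑' n, ‖Bkf k n‖ ^ 2 := rfl
        _ ≤ ∑' n, (2 * Real.sqrt M * |h k|) ^ 2 * u (n+k) ^ 2 :=
            Summable.tsum_le_tsum hpt hsum1 hsum2
        _ ≤ (2 * Real.sqrt M * |h k|) ^ 2 * U := hshift
        _ = (2 * Real.sqrt M * |h k| * ‖ul‖) ^ 2 := by rw [← hulU]; ring
    have hBS : ‖BSl‖ ≤ cB * ‖ul‖ := by
      have hsum_h : ∑ k ∈ Finset.Icc 1 m, |h k| ≤ H := by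
        rw [← Finset.Ico_add_one_right_eq_Icc, Finset.sum_Ico_eq_sum_range]
        calc ∑ i ∈ Finset.range m, |h (1 + i)|
            = ∑ i ∈ Finset.range m, |h (i + 1)| := by
              exact Finset.sum_congr rfl fun i _ => by rw [add_comm]
          _ ≤ H := Summable.sum_le_tsum _ (fun i _ => abs_nonneg _) hh
      calc ‖BSl‖ ≤ ∑ k ∈ Finset.Icc 1 m, ‖Bkl k‖ := norm_sum_le _ _
        _ ≤ ∑ k ∈ Finset.Icc 1 m, 2 * Real.sqrt M * |h k| * ‖ul‖ :=
            Finset.sum_le_sum hBk_norm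
        _ = 2 * Real.sqrt M * (∑ k ∈ Finset.Icc 1 m, |h k|) * ‖ul‖ := by
            rw [← Finset.sum_mul, Finset.mul_sum]
        _ ≤ 2 * Real.sqrt M * H * ‖ul‖ := by
            have h2M : (0:ℝ) ≤ 2 * Real.sqrt M := by positivity
            exact mul_le_mul_of_nonneg_right
              (mul_le_mul_of_nonneg_left hsum_h h2M) hul0
        _ = cB * ‖ul‖ := by rw [hcBdef]
    -- bound on A part
    have hAS_pt : ∀ n, ‖AS n‖ ^ 2 ≤ (4 * C * U) * (f n ^ 2 / g n) := by
      intro n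
      set w : ℕ → ℝ := fun k => 1 / (f (n-k) * (f n ^ 2 - f (n-k) ^ 2)) with hwdef
      set s : Finset ℕ := (Finset.Icc 1 m).filter (· ≤ n) with hsdef
      have hmem_s : ∀ k ∈ s, 1 ≤ k ∧ k ≤ m ∧ k ≤ n := by
        intro k hk
        simp only [hsdef, Finset.mem_filter, Finset.mem_Icc] at hk
        exact ⟨hk.1.1, hk.1.2, hk.2⟩
      have h1 : ‖AS n‖ ≤ ∑ k ∈ s, u (n-k) * (2 * f n * w k) := by
        calc ‖AS n‖ ≤ ∑ k ∈ Finset.Icc 1 m,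
              ‖if k ≤ n then (⇑φ : ℕ → ℂ) (n-k) / ((f n - f (n-k) : ℝ) : ℂ) else 0‖ :=
              norm_sum_le _ _
          _ = ∑ k ∈ Finset.Icc 1 m, (if k ≤ n then
              ‖(⇑φ : ℕ → ℂ) (n-k) / ((f n - f (n-k) : ℝ) : ℂ)‖ else 0) := by
              refine Finset.sum_congr rfl fun k _ => ?_
              split <;> simp
          _ = ∑ k ∈ s, ‖(⇑φ : ℕ → ℂ) (n-k) / ((f n - f (n-k) : ℝ) : ℂ)‖ :=
              (Finset.sum_filter _ _).symm
          _ ≤ ∑ k ∈ s, u (n-k) * (2 * f n * w k) := by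
              refine Finset.sum_le_sum fun k hk => ?_
              obtain ⟨hk1, hkm, hkn⟩ := hmem_s k hk
              have hlt : f (n-k) < f n := hfmono (by omega)
              have ha := hfpos (n-k)
              rw [norm_div, Complex.norm_real, Real.norm_eq_abs,
                abs_of_pos (by linarith : (0:ℝ) < f n - f (n-k)), hu_eq (n-k)]
              have hkey := keyA n k hk1 hkn
              calc ‖(⇑φ : ℕ → ℂ) (n-k)‖ / (f n - f (n-k))
                  = (f (n-k) * ‖(⇑φ : ℕ → ℂ) (n-k)‖) * (1 / (f (n-k) * (f n - f (n-k)))) := by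
                    rw [one_div, mul_inv, ← mul_assoc, mul_comm (f (n-k)) ‖(⇑φ : ℕ → ℂ) (n-k)‖,
                      mul_assoc ‖(⇑φ : ℕ → ℂ) (n-k)‖, mul_inv_cancel₀ ha.ne', mul_one,
                      div_eq_mul_inv]
                _ ≤ (f (n-k) * ‖(⇑φ : ℕ → ℂ) (n-k)‖) * (2 * f n * w k) :=
                    mul_le_mul_of_nonneg_left hkey (by positivity)
      have h2 : (∑ k ∈ s, u (n-k) * (2 * f n * w k)) ^ 2
          ≤ (∑ k ∈ s, u (n-k) ^ 2) * (∑ k ∈ s, (2 * f n * w k) ^ 2) :=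
        Finset.sum_mul_sq_le_sq_mul_sq s _ _
      have h3 : ∑ k ∈ s, u (n-k) ^ 2 ≤ U := by
        have hinj : ∀ x ∈ s, ∀ y ∈ s, n - x = n - y → x = y := by
          intro x hx y hy hxy
          obtain ⟨-, -, hxn⟩ := hmem_s x hx
          obtain ⟨-, -, hyn⟩ := hmem_s y hy
          omega
        calc ∑ k ∈ s, u (n-k) ^ 2
            = ∑ j ∈ s.image (fun k => n - k), u j ^ 2 := (Finset.sum_image (f := fun j => u j ^ 2) (g := fun k => n - k) hinj).symm
          _ ≤ U := Summable.sum_le_tsum _ (fun i _ => sq_nonneg _) hu_sum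
      have h4 : ∑ k ∈ s, (2 * f n * w k) ^ 2 ≤ 4 * f n ^ 2 * (C / g n) := by
        have hsub : s ⊆ Finset.Icc 1 n := by
          intro k hk
          obtain ⟨hk1, -, hkn⟩ := hmem_s k hk
          exact Finset.mem_Icc.mpr ⟨hk1, hkn⟩
        calc ∑ k ∈ s, (2 * f n * w k) ^ 2
            = 4 * f n ^ 2 * ∑ k ∈ s, w k ^ 2 := by
              rw [Finset.mul_sum]
              exact Finset.sum_congr rfl fun k _ => by ring
          _ ≤ 4 * f n ^ 2 * ∑ k ∈ Finset.Icc 1 n, w k ^ 2 :=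
              mul_le_mul_of_nonneg_left
                (Finset.sum_le_sum_of_subset_of_nonneg hsub fun k _ _ => sq_nonneg _)
                (by positivity)
          _ ≤ 4 * f n ^ 2 * (C / g n) :=
              mul_le_mul_of_nonneg_left (key2 n) (by positivity)
      have h5 : ‖AS n‖ ^ 2 ≤ U * (4 * f n ^ 2 * (C / g n)) := by
        calc ‖AS n‖ ^ 2 ≤ (∑ k ∈ s, u (n-k) * (2 * f n * w k)) ^ 2 :=
              pow_le_pow_left₀ (norm_nonneg _) h1 2
          _ ≤ (∑ k ∈ s, u (n-k) ^ 2) * (∑ k ∈ s, (2 * f n * w k) ^ 2) := h2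
          _ ≤ U * (4 * f n ^ 2 * (C / g n)) := by
              refine mul_le_mul h3 h4 (Finset.sum_nonneg fun k _ => sq_nonneg _) hU0
      calc ‖AS n‖ ^ 2 ≤ U * (4 * f n ^ 2 * (C / g n)) := h5
        _ = (4 * C * U) * (f n ^ 2 / g n) := by ring
    have hASsum : Summable (fun n => ‖AS n‖ ^ 2) :=
      summable_fin _ (N + m) (fun n hn => by rw [zeroA n hn]; simp)
    have hAS : ‖ASl‖ ≤ cA * ‖ul‖ := by
      apply l2norm_le _ (mul_nonneg hcA hul0)
      have hsq : (cA * ‖ul‖) ^ 2 = 4 * (C * S) * U := by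
        rw [mul_pow, hulU, hcAdef, mul_pow, Real.sq_sqrt (mul_nonneg hC.le hS0)]
        ring
      rw [hsq]
      calc ∑' n, ‖(⇑ASl : ℕ → ℂ) n‖ ^ 2 = ∑' n, ‖AS n‖ ^ 2 := rfl
        _ ≤ ∑' n, (4 * C * U) * (f n ^ 2 / g n) :=
            Summable.tsum_le_tsum hAS_pt hASsum (hfg.mul_left _)
        _ = (4 * C * U) * S := by rw [tsum_mul_left]
        _ = 4 * (C * S) * U := by ring
    calc ‖ASl - BSl‖ ≤ ‖ASl‖ + ‖BSl‖ := norm_sub_le _ _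
      _ ≤ cA * ‖ul‖ + cB * ‖ul‖ := add_le_add hAS hBS
      _ = (cA + cB) * ‖ul‖ := by ring
  obtain ⟨hmem, hten⟩ := hTφ
  have hbound : ‖Tφ‖ ≤ (cA + cB) * ‖ul‖ :=
    le_of_tendsto hten.norm (Filter.Eventually.of_forall fun m => main m (hmem m))
  calc ‖Tφ‖ ≤ (cA + cB) * ‖ul‖ := hbound
    _ ≤ (cA + cB + 1) * ‖ul‖ := by nlinarith
end
end

section
/- Let λ∈(3/4, 1) and f(n) = n^λ + 1 for n∈ℕ. Then f∈𝓜_s(1); in fact, for any α∈(1+2λ, 6λ−2), the choice g(n) = n^α + 1 witnesses the defining conditions of 𝓜_s(1). -/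
open Filter Topology
open scoped ENNReal

noncomputable section

/-!
Write `f t = t ^ λ + 1` and `N = m + k`. Concavity of `t ↦ t ^ λ` (Bernoulli's inequality) gives
`N (N ^ λ - m ^ λ) ≥ λ k N ^ λ`, hence `N (f N ^ 2 - f m ^ 2) ≥ λ k N ^ (2λ)`. With this lower
bound on the denominators, both the `𝓜(1)` condition with `h k = k ^ (α/2 - 3λ) / λ` and the bound
`4 λ⁻² (k⁻² + f (n - k)⁻²)` on the `k`-th summand of the `𝓜_s` sum reduce to comparing powers of
`m`, `k` and `N`. Everything else is summability of `p`-series: `2λ > 1`, `α - 2λ > 1` and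
`3λ - α/2 > 1`.
-/

theorem mul_sub_mul_rpow_le_rpow_sub_rpow_mul {p x y : ℝ} (hp0 : 0 ≤ p) (hp1 : p ≤ 1)
    (hx : 0 ≤ x) (hxy : x ≤ y) : p * (y - x) * y ^ p ≤ (y ^ p - x ^ p) * y := by
  rcases (hx.trans hxy).eq_or_lt with rfl | hy
  · simp [le_antisymm hxy hx]
  have hyp : 0 < y ^ p := Real.rpow_pos_of_pos hy p
  -- Bernoulli's inequality at `s = x / y - 1`
  have hB := rpow_one_add_le_one_add_mul_self (s := x / y - 1)
    (by linarith [div_nonneg hx hy.le]) hp0 hp1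
  rw [add_sub_cancel, Real.div_rpow hx hy.le, div_le_iff₀ hyp] at hB
  have e : (1 + p * (x / y - 1)) * y ^ p * y = (y + p * (x - y)) * y ^ p := by
    field_simp
  nlinarith [mul_le_mul_of_nonneg_right hB hy.le]

theorem mul_rpow_sq_le_mul_sq_sub_sq {p m k : ℝ} (hp0 : 0 ≤ p) (hp1 : p ≤ 1) (hm : 0 ≤ m)
    (hk : 0 ≤ k) :
    p * k * ((m + k) ^ p) ^ 2 ≤ (m + k) * (((m + k) ^ p + 1) ^ 2 - (m ^ p + 1) ^ 2) := by
  have hmk : m ≤ m + k := le_add_of_nonneg_right hk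
  have hxy : m ^ p ≤ (m + k) ^ p := Real.rpow_le_rpow hm hmk hp0
  have hx : 0 ≤ m ^ p := Real.rpow_nonneg hm p
  have tangent := mul_sub_mul_rpow_le_rpow_sub_rpow_mul hp0 hp1 hm hmk
  rw [add_sub_cancel_left] at tangent
  nlinarith [mul_le_mul_of_nonneg_right tangent (hx.trans hxy),
    mul_nonneg (mul_nonneg (sub_nonneg.2 hxy) (hm.trans hmk)) (by linarith : 0 ≤ m ^ p + 2)]

theorem div_sq_le_of_mul_sq_le {p m k G B : ℝ} (hp0 : 0 < p) (hp1 : p ≤ 1) (hm : 0 ≤ m)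
    (hk : 0 < k) (hG : 0 ≤ G)
    (h : G * (m + k) ^ 2 ≤ (k * ((m + k) ^ p) ^ 2 * (m ^ p + 1)) ^ 2 * B) :
    G / ((m ^ p + 1) * (((m + k) ^ p + 1) ^ 2 - (m ^ p + 1) ^ 2)) ^ 2 ≤ B / p ^ 2 := by
  set Q := (m ^ p + 1) * (((m + k) ^ p + 1) ^ 2 - (m ^ p + 1) ^ 2)
  set L := k * ((m + k) ^ p) ^ 2 * (m ^ p + 1)
  have hN : 0 < m + k := by linarith
  have hL : 0 < L := by positivity
  have hLQ : p * L ≤ (m + k) * Q := by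
    have := mul_le_mul_of_nonneg_right (mul_rpow_sq_le_mul_sq_sub_sq hp0.le hp1 hm hk.le)
      (by positivity : 0 ≤ m ^ p + 1)
    linarith
  have hQ : 0 < Q := pos_of_mul_pos_right ((by positivity : 0 < p * L).trans_le hLQ) hN.le
  calc G / Q ^ 2 = G * (m + k) ^ 2 / ((m + k) * Q) ^ 2 := by field_simp
    _ ≤ G * (m + k) ^ 2 / (p * L) ^ 2 := by gcongr
    _ ≤ L ^ 2 * B / (p * L) ^ 2 := by gcongr
    _ = B / p ^ 2 := by field_simp

theorem rpow_add_one_le_rpow_sub_mul {a b n N : ℝ} (hab : a ≤ b) (hb : 0 < b)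
    (hn : 0 ≤ n) (hnN : n ≤ N) (hN : 1 ≤ N) : n ^ b + 1 ≤ N ^ (b - a) * (n ^ a + 1) := by
  have hsplit : n ^ b = n ^ (b - a) * n ^ a := by
    rw [← Real.rpow_add' hn (by linarith), sub_add_cancel]
  have hle : n ^ (b - a) ≤ N ^ (b - a) := Real.rpow_le_rpow hn hnN (by linarith)
  have hone : 1 ≤ N ^ (b - a) := Real.one_le_rpow hN (by linarith)
  rw [hsplit]
  nlinarith [Real.rpow_nonneg hn a]

theorem rpow_add_one_mul_sq_le {p α n k : ℝ} (hα1 : 2 * p ≤ α) (hα2 : α ≤ 6 * p - 2)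
    (hn : 0 ≤ n) (hk : 1 ≤ k) :
    (n ^ α + 1) * (n + k) ^ 2 ≤ (k * ((n + k) ^ p) ^ 2 * (n ^ p + 1)) ^ 2 * k ^ (α - 6 * p) := by
  have hp : 0 ≤ p := by linarith
  have hN : 1 ≤ n + k := by linarith
  have hN0 : 0 < n + k := by linarith
  have hk0 : 0 < k := by linarith
  have hg : n ^ α + 1 ≤ (n + k) ^ (α - 2 * p) * (n ^ p + 1) ^ 2 := by
    refine (rpow_add_one_le_rpow_sub_mul hα1 (by linarith) hn (by linarith) hN).trans ?_
    gcongr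
    rw [mul_comm, Real.rpow_mul hn, Real.rpow_two]
    nlinarith [Real.rpow_nonneg hn p]
  have hpow : (n + k) ^ (α - 6 * p + 2) ≤ k ^ (α - 6 * p + 2) :=
    Real.rpow_le_rpow_of_nonpos hk0 (by linarith) (by linarith)
  have eN : (n + k) ^ (α - 2 * p) * (n + k) ^ 2
      = ((n + k) ^ p) ^ 4 * (n + k) ^ (α - 6 * p + 2) := by
    rw [← Real.rpow_mul_natCast hN0.le, ← Real.rpow_natCast, ← Real.rpow_add hN0,
      ← Real.rpow_add hN0]
    ring_nf
  have ek : k ^ (α - 6 * p + 2) = k ^ 2 * k ^ (α - 6 * p) := by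
    rw [← Real.rpow_natCast, ← Real.rpow_add hk0]
    ring_nf
  calc (n ^ α + 1) * (n + k) ^ 2
      ≤ (n + k) ^ (α - 2 * p) * (n ^ p + 1) ^ 2 * (n + k) ^ 2 := by gcongr
    _ = ((n + k) ^ p) ^ 4 * (n ^ p + 1) ^ 2 * (n + k) ^ (α - 6 * p + 2) := by
      rw [mul_right_comm, eN]; ring
    _ ≤ ((n + k) ^ p) ^ 4 * (n ^ p + 1) ^ 2 * k ^ (α - 6 * p + 2) := by gcongr
    _ = _ := by rw [ek]; ring

theorem rpow_add_add_one_mul_sq_le {p α m k : ℝ} (hp : p ≤ 1) (hα0 : 0 ≤ α)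
    (hα : α ≤ 6 * p - 2) (hm : 0 ≤ m) (hk : 1 ≤ k) :
    ((m + k) ^ α + 1) * (m + k) ^ 2
      ≤ (k * ((m + k) ^ p) ^ 2 * (m ^ p + 1)) ^ 2 * (4 * (1 / k ^ 2 + 1 / (m ^ p + 1) ^ 2)) := by
  have hp0 : 0 ≤ p := by linarith
  have hN : 1 ≤ m + k := by linarith
  have hN0 : 0 < m + k := by linarith
  set y := (m + k) ^ p
  set f := m ^ p + 1
  have hf : 0 < f := by positivity
  have hg : ((m + k) ^ α + 1) * (m + k) ^ 2 ≤ 2 * y ^ 6 := by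
    have hle : (m + k) ^ α ≤ (m + k) ^ (6 * p - 2) := Real.rpow_le_rpow_of_exponent_le hN hα
    have hone : 1 ≤ (m + k) ^ (6 * p - 2) := Real.one_le_rpow hN (by linarith)
    have e : (m + k) ^ (6 * p - 2) * (m + k) ^ 2 = y ^ 6 := by
      rw [← Real.rpow_mul_natCast hN0.le, ← Real.rpow_natCast, ← Real.rpow_add hN0]
      ring_nf
    nlinarith [pow_pos hN0 2]
  -- subadditivity of `t ↦ t ^ p` and `k ^ p ≤ k`
  have hy : y ≤ f + k := by
    have hkp : k ^ p ≤ k := by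
      simpa using Real.rpow_le_rpow_of_exponent_le hk hp
    linarith [Real.rpow_add_le_add_rpow hm (by linarith : 0 ≤ k) hp0 hp]
  have hy0 : 0 ≤ y := Real.rpow_nonneg hN0.le p
  calc ((m + k) ^ α + 1) * (m + k) ^ 2 ≤ 2 * y ^ 6 := hg
    _ ≤ 4 * y ^ 4 * (f ^ 2 + k ^ 2) := by
      nlinarith [pow_le_pow_left₀ hy0 hy 2, pow_nonneg hy0 4, sq_nonneg (f - k)]
    _ = _ := by field_simp

theorem summable_one_div_rpow_add_one_sq {p : ℝ} (hp : 1 / 2 < p) :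
    Summable fun n : ℕ => 1 / ((n : ℝ) ^ p + 1) ^ 2 := by
  refine (Real.summable_one_div_nat_rpow.2 (by linarith : 1 < 2 * p))
    |>.of_norm_bounded_eventually_nat (Filter.eventually_atTop.2 ⟨1, fun n hn => ?_⟩)
  have hn0 : (0 : ℝ) < n := by exact_mod_cast hn
  rw [Real.norm_of_nonneg (by positivity), mul_comm, Real.rpow_mul hn0.le, Real.rpow_two]
  gcongr
  linarith

theorem summable_rpow_add_one_sq_div {p α : ℝ} (hp : 0 ≤ p) (hα : 1 + 2 * p < α) :
    Summable fun n : ℕ => ((n : ℝ) ^ p + 1) ^ 2 / ((n : ℝ) ^ α + 1) := by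
  refine ((Real.summable_one_div_nat_rpow.2 (by linarith : 1 < α - 2 * p)).mul_left 4
    ).of_norm_bounded_eventually_nat (Filter.eventually_atTop.2 ⟨1, fun n hn => ?_⟩)
  have hn1 : (1 : ℝ) ≤ n := by exact_mod_cast hn
  have hn0 : (0 : ℝ) < n := by linarith
  have hone : 1 ≤ (n : ℝ) ^ p := Real.one_le_rpow hn1 hp
  have hsplit : (n : ℝ) ^ α = (n : ℝ) ^ (α - 2 * p) * ((n : ℝ) ^ p) ^ 2 := by
    rw [← Real.rpow_two, ← Real.rpow_mul hn0.le, ← Real.rpow_add hn0]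
    ring_nf
  have hpos : 0 < (n : ℝ) ^ (α - 2 * p) := Real.rpow_pos_of_pos hn0 _
  rw [Real.norm_of_nonneg (by positivity), div_le_iff₀ (by positivity), hsplit]
  field_simp
  have hsq : ((n : ℝ) ^ p + 1) ^ 2 ≤ 4 * ((n : ℝ) ^ p) ^ 2 := by nlinarith
  nlinarith [mul_le_mul_of_nonneg_right hsq hpos.le]

theorem memKminus_rpow_add_one {p : ℝ} (hp : 1 / 2 < p) :
    MemKminus fun n : ℕ => (n : ℝ) ^ p + 1 := by
  refine ⟨⟨by positivity, fun n => ?_⟩, summable_one_div_rpow_add_one_sq hp⟩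
  have := Real.rpow_lt_rpow (Nat.cast_nonneg n) (lt_add_one (n : ℝ)) (by linarith : 0 < p)
  push_cast
  linarith

theorem mWitness_rpow_add_one {p α : ℝ} (hp : p ≤ 1) (hα1 : 1 + 2 * p < α)
    (hα2 : α < 6 * p - 2) :
    MWitness 1 (fun n : ℕ => (n : ℝ) ^ p + 1) (fun n : ℕ => (n : ℝ) ^ α + 1)
      (fun k : ℕ => (k : ℝ) ^ (α / 2 - 3 * p) / p) := by
  have hp0 : 0 < p := by linarith
  refine ⟨fun n => by positivity, ?_, summable_rpow_add_one_sq_div hp0.le hα1, fun n k hk => ?_⟩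
  · refine (summable_nat_add_iff (f := fun k : ℕ => |(k : ℝ) ^ (α / 2 - 3 * p) / p|) 1).2 ?_
    simp_rw [abs_div, abs_of_pos hp0]
    exact (Real.summable_nat_rpow.2 (by linarith : α / 2 - 3 * p < -1)).abs.div_const p
  · have hk1 : (1 : ℝ) ≤ k := by exact_mod_cast hk
    have hh : ((k : ℝ) ^ (α / 2 - 3 * p) / p) ^ 2 = (k : ℝ) ^ (α - 6 * p) / p ^ 2 := by
      rw [div_pow, ← Real.rpow_mul_natCast (by positivity)]
      ring_nf
    simp only [Real.rpow_eq_pow, Real.rpow_one, Nat.cast_add, hh]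
    exact div_sq_le_of_mul_sq_le hp0 hp (Nat.cast_nonneg n) (by linarith) (by positivity)
      (rpow_add_one_mul_sq_le (by linarith) hα2.le (Nat.cast_nonneg n) hk1)

theorem exists_forall_sum_Icc_div_sq_lt {p α : ℝ} (hp1 : 1 / 2 < p) (hp2 : p ≤ 1)
    (hα0 : 0 ≤ α) (hα : α ≤ 6 * p - 2) :
    ∃ C : ℝ, 0 < C ∧ ∀ n : ℕ,
      (∑ k ∈ Finset.Icc 1 n,
        ((n : ℝ) ^ α + 1) /
          (Real.rpow (((n - k : ℕ) : ℝ) ^ p + 1) 1 *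
            (((n : ℝ) ^ p + 1) ^ 2 - (((n - k : ℕ) : ℝ) ^ p + 1) ^ 2)) ^ 2) < C := by
  have hp0 : 0 < p := by linarith
  set F : ℕ → ℝ := fun m => 1 / ((m : ℝ) ^ p + 1) ^ 2
  set G : ℕ → ℝ := fun k => 1 / (k : ℝ) ^ 2
  have hF : Summable F := summable_one_div_rpow_add_one_sq hp1
  have hG : Summable G := Real.summable_one_div_nat_pow.2 one_lt_two
  refine ⟨4 / p ^ 2 * (∑' k, G k + ∑' m, F m) + 1, by positivity, fun n => ?_⟩
  have hterm : ∀ k ∈ Finset.Icc 1 n,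
      ((n : ℝ) ^ α + 1) /
          (Real.rpow (((n - k : ℕ) : ℝ) ^ p + 1) 1 *
            (((n : ℝ) ^ p + 1) ^ 2 - (((n - k : ℕ) : ℝ) ^ p + 1) ^ 2)) ^ 2
        ≤ 4 / p ^ 2 * (G k + F (n - k)) := by
    intro k hk
    obtain ⟨hk1, hkn⟩ := Finset.mem_Icc.1 hk
    have hn : (n : ℝ) = ((n - k : ℕ) : ℝ) + k := by rw [Nat.cast_sub hkn]; ring
    rw [Real.rpow_eq_pow, Real.rpow_one, hn]
    refine (div_sq_le_of_mul_sq_le hp0 hp2 (Nat.cast_nonneg _) (by positivity) (by positivity)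
      (rpow_add_add_one_mul_sq_le hp2 hα0 hα (Nat.cast_nonneg _) (by exact_mod_cast hk1))).trans_eq
      (by ring)
  have hsumF : ∑ k ∈ Finset.Icc 1 n, F (n - k) ≤ ∑' m, F m := by
    rw [← Finset.sum_image (g := (n - ·)) fun x hx y hy h => by
      simp only [Finset.coe_Icc, Set.mem_Icc] at hx hy h; omega]
    exact hF.sum_le_tsum _ fun _ _ => by positivity
  have hsumG : ∑ k ∈ Finset.Icc 1 n, G k ≤ ∑' k, G k :=
    hG.sum_le_tsum _ fun _ _ => by positivity
  calc _ ≤ ∑ k ∈ Finset.Icc 1 n, 4 / p ^ 2 * (G k + F (n - k)) := Finset.sum_le_sum hterm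
    _ = 4 / p ^ 2 * (∑ k ∈ Finset.Icc 1 n, G k + ∑ k ∈ Finset.Icc 1 n, F (n - k)) := by
      rw [← Finset.sum_add_distrib, Finset.mul_sum]
    _ ≤ 4 / p ^ 2 * (∑' k, G k + ∑' m, F m) := by gcongr
    _ < _ := lt_add_one _

/-- Let `λ ∈ (3/4, 1)` and `f n = n^λ + 1`. Then `f ∈ 𝓜_s(1)`; in fact, for
any `α ∈ (1 + 2λ, 6λ - 2)` the function `g n = n^α + 1` witnesses the defining conditions of
`𝓜_s(1)`. -/
theorem stmt15 (lam : ℝ) (hlam1 : 3 / 4 < lam) (hlam2 : lam < 1) :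
    MemMs 1 (fun n : ℕ => (n : ℝ) ^ lam + 1) ∧
    ∀ α : ℝ, 1 + 2 * lam < α → α < 6 * lam - 2 →
      ∃ h : ℕ → ℝ,
        MWitness 1 (fun n : ℕ => (n : ℝ) ^ lam + 1) (fun n : ℕ => (n : ℝ) ^ α + 1) h ∧
        ∃ C : ℝ, 0 < C ∧ ∀ n : ℕ,
          (∑ k ∈ Finset.Icc 1 n,
            ((n : ℝ) ^ α + 1) /
              (Real.rpow (((n - k : ℕ) : ℝ) ^ lam + 1) 1 *
                (((n : ℝ) ^ lam + 1) ^ 2 - (((n - k : ℕ) : ℝ) ^ lam + 1) ^ 2)) ^ 2) < C := by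
  have hlo : 1 + 2 * lam < 4 * lam - 1 / 2 := by linarith
  have hhi : 4 * lam - 1 / 2 < 6 * lam - 2 := by linarith
  refine ⟨⟨memKminus_rpow_add_one (by linarith), _, _, mWitness_rpow_add_one hlam2.le hlo hhi,
      exists_forall_sum_Icc_div_sq_lt (by linarith) hlam2.le (by linarith) hhi.le⟩,
    fun α hα1 hα2 => ⟨_, mWitness_rpow_add_one hlam2.le hα1 hα2,
      exists_forall_sum_Icc_div_sq_lt (by linarith) hlam2.le (by linarith) hα2.le⟩⟩
end
end
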